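/- arXiv:2408.01785 — 5 statements merged into one kernel-verified Lean document; each statement's English description precedes it below -/
import Mathlib

section
/- Define B : ℤ² × ℤ² → ℤ by B((x,y),(u,v)) = u·y + v·x if v ≥ 0, and B((x,y),(u,v)) = u·y − v·(min(0,y) − x) if v ≤ 0. Then B is symmetric: B((x,y),(u,v)) = B((u,v),(x,y)) for all (x,y),(u,v) ∈ ℤ². -/
theorem eq_mul_add_mul_sub_min_mul_min (B : ℤ × ℤ → ℤ × ℤ → ℤ)
    (h1 : ∀ x y u v : ℤ, 0 ≤ v → B (x, y) (u, v) = u * y + v * x)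
    (h2 : ∀ x y u v : ℤ, v ≤ 0 → B (x, y) (u, v) = u * y - v * (min 0 y - x))
    (x y u v : ℤ) : B (x, y) (u, v) = u * y + v * x - min 0 v * min 0 y := by
  rcases le_total 0 v with hv | hv
  · rw [h1 x y u v hv, min_eq_left hv]
    ring
  · rw [h2 x y u v hv, min_eq_right hv]
    ring

theorem stmt1 (B : ℤ × ℤ → ℤ × ℤ → ℤ)
    (h1 : ∀ x y u v : ℤ, 0 ≤ v → B (x, y) (u, v) = u * y + v * x)
    (h2 : ∀ x y u v : ℤ, v ≤ 0 → B (x, y) (u, v) = u * y - v * (min 0 y - x)) :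
    ∀ a b : ℤ × ℤ, B a b = B b a := by
  rintro ⟨x, y⟩ ⟨u, v⟩
  rw [eq_mul_add_mul_sub_min_mul_min B h1 h2, eq_mul_add_mul_sub_min_mul_min B h1 h2]
  ring
end

section
/- Let S be a finite set of pairwise distinct linear maps ℝ^r → ℝ, and let e₁,…,e_r denote the standard basis of ℝ^r. Suppose f* ∈ S is such that the vector (f*(e₁),…,f*(e_r)) is lexicographically minimal among the vectors (f(e₁),…,f(e_r)) for f ∈ S. Then there exists a nonempty open set U ⊆ (0,∞)^r such that f*(x) < f(x) for all x ∈ U and all f ∈ S with f ≠ f*. -/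
/-!
Along the curve `t ↦ (1, t, t², …, t^(r-1))`, which lies in the open positive orthant for `t > 0`,
a linear map `f` takes the value `∑ f(eᵢ) tⁱ`. As `t → 0⁺` the sign of `(f - f*)` on the curve
is that of the first nonzero coefficient `f(eₖ) - f*(eₖ)`, which is positive by lexicographic
minimality of `f*` and distinctness. Since `S` is finite, one `t` works for all `f ≠ f*`, and the
strict inequalities persist on an open neighbourhood of that point.
-/

/-- Lexicographic order on vectors in `Fin r → ℝ`. -/
def LexLE {r : ℕ} (a b : Fin r → ℝ) : Prop :=
  a = b ∨ ∃ k, (∀ j, j < k → a j = b j) ∧ a k < b k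

open Filter Topology Finset

lemma eventually_pos_sum_mul_pow {n : ℕ} (c : Fin n → ℝ) (k : Fin n)
    (hzero : ∀ j < k, c j = 0) (hk : 0 < c k) :
    ∀ᶠ t in 𝓝[>] 0, 0 < ∑ i, c i * t ^ (i : ℕ) := by
  -- The truncated exponent `i - k` is harmless: `c i = 0` for `i < k`.
  set q : ℝ → ℝ := fun t => ∑ i, c i * t ^ ((i : ℕ) - k)
  have hfactor : ∀ t : ℝ, ∑ i, c i * t ^ (i : ℕ) = t ^ (k : ℕ) * q t := fun t => by
    simp only [q, mul_sum]
    refine sum_congr rfl fun i _ => ?_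
    rcases lt_or_ge i k with hi | hi
    · simp [hzero i hi]
    · rw [mul_left_comm, ← pow_add, Nat.add_sub_cancel' (Fin.le_iff_val_le_val.1 hi)]
  have hq0 : q 0 = c k := by
    refine (sum_eq_single k (fun i _ hik => ?_) (by simp)).trans (by simp)
    rcases lt_or_gt_of_ne hik with hi | hi
    · simp [hzero i hi]
    · simp [zero_pow (Nat.sub_ne_zero_of_lt (Fin.lt_def.1 hi))]
  have hq_cont : Continuous q := by fun_prop
  have hq : ∀ᶠ t in 𝓝 0, 0 < q t := (hq_cont.tendsto 0).eventually_const_lt (hq0 ▸ hk)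
  filter_upwards [nhdsWithin_le_nhds hq, self_mem_nhdsWithin] with t hqt (ht : 0 < t)
  rw [hfactor]
  exact mul_pos (pow_pos ht _) hqt

lemma LinearMap.apply_eq_sum_mul_apply_single {R ι : Type*} [Semiring R] [Fintype ι] [DecidableEq ι]
    (f : (ι → R) →ₗ[R] R) (x : ι → R) :
    f x = ∑ i, x i * f (Pi.single i 1) := by
  conv_lhs => rw [← univ_sum_single x]
  refine (map_sum f _ _).trans (sum_congr rfl fun i _ => ?_)
  rw [← smul_eq_mul, ← map_smul, ← Pi.single_smul, smul_eq_mul, mul_one]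

lemma eventually_apply_pow_lt_of_lexLE {n : ℕ} {f g : (Fin n → ℝ) →ₗ[ℝ] ℝ}
    (hlex : LexLE (fun i => g (Pi.single i 1)) (fun i => f (Pi.single i 1))) (hne : f ≠ g) :
    ∀ᶠ t in 𝓝[>] 0, g (fun i => t ^ (i : ℕ)) < f (fun i => t ^ (i : ℕ)) := by
  obtain ⟨k, hagree, hlt⟩ := hlex.resolve_left fun h =>
    hne ((Pi.basisFun ℝ (Fin n)).ext fun i => by simpa using (congrFun h i).symm)
  have hpos := eventually_pos_sum_mul_pow (fun i => f (Pi.single i 1) - g (Pi.single i 1)) k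
    (fun j hj => sub_eq_zero.2 (hagree j hj).symm) (sub_pos.2 hlt)
  filter_upwards [hpos] with t ht
  rw [f.apply_eq_sum_mul_apply_single, g.apply_eq_sum_mul_apply_single, ← sub_pos,
    ← sum_sub_distrib]
  simpa only [mul_sub, mul_comm] using ht

theorem stmt5_general (r : ℕ) (S : Finset ((Fin r → ℝ) →ₗ[ℝ] ℝ)) (fstar : (Fin r → ℝ) →ₗ[ℝ] ℝ)
    (hmin : ∀ f ∈ S, LexLE (fun i => fstar (Pi.single i 1)) (fun i => f (Pi.single i 1))) :
    ∃ U : Set (Fin r → ℝ), IsOpen U ∧ U.Nonempty ∧ (∀ x ∈ U, ∀ i, 0 < x i) ∧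
      ∀ x ∈ U, ∀ f ∈ S, f ≠ fstar → fstar x < f x := by
  have hcurve : ∀ᶠ t in 𝓝[>] 0, 0 < t ∧ ∀ f ∈ S, f ≠ fstar →
      fstar (fun i => t ^ (i : ℕ)) < f (fun i => t ^ (i : ℕ)) :=
    eventually_mem_nhdsWithin.and <| (eventually_all_finset S).2 fun f hf =>
      eventually_imp_distrib_left.2 (eventually_apply_pow_lt_of_lexLE (hmin f hf))
  obtain ⟨t, ht, hlt⟩ := hcurve.exists
  have hnhds : ∀ᶠ y in 𝓝 (fun i : Fin r => t ^ (i : ℕ)),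
      (∀ i, 0 < y i) ∧ ∀ f ∈ S, f ≠ fstar → fstar y < f y :=
    (eventually_all.2 fun i => continuousAt_const.eventually_lt (continuous_apply i).continuousAt
      (pow_pos ht _)).and <| (eventually_all_finset S).2 fun f hf =>
        eventually_imp_distrib_left.2 fun hne =>
          fstar.continuous_of_finiteDimensional.continuousAt.eventually_lt
            f.continuous_of_finiteDimensional.continuousAt (hlt f hf hne)
  obtain ⟨U, hU, hUopen, hxU⟩ := eventually_nhds_iff.1 hnhds
  exact ⟨U, hUopen, ⟨_, hxU⟩, fun y hy => (hU y hy).1, fun y hy => (hU y hy).2⟩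

theorem stmt5 (r : ℕ) (S : Finset ((Fin r → ℝ) →ₗ[ℝ] ℝ)) (fstar : (Fin r → ℝ) →ₗ[ℝ] ℝ)
    (hmem : fstar ∈ S)
    (hmin : ∀ f ∈ S, LexLE (fun i => fstar (Pi.single i 1)) (fun i => f (Pi.single i 1))) :
    ∃ U : Set (Fin r → ℝ), IsOpen U ∧ U.Nonempty ∧ (∀ x ∈ U, ∀ i, 0 < x i) ∧
      ∀ x ∈ U, ∀ f ∈ S, f ≠ fstar → fstar x < f x :=
  stmt5_general r S fstar hmin
end

section
/- Fix integers d ≥ 1, r ≥ 1. Let (a,b) ∈ ℤ^d × ℤ^r satisfy a₁ + ⋯ + a_d = min(b₁,…,b_r), and define f : ℤ^d × ℤ^r → ℤ by f(u,w) = ⟨a,u⟩ + ⟨b,w⟩ (the standard inner products). Then for all (u,w), (u',w') ∈ ℤ^d × ℤ^r with min(u₁,…,u_d) = 0 and min(u'₁,…,u'_d) = 0, setting m = min_{j}(u_j + u'_j), one has f(u,w) + f(u',w') = min_{i ∈ [r]} f( u + u' − m·𝟙, w + w' + m·εᵢ ). -/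
/-!
Since `∑ a = min b`, the `i`-th argument of the minimum equals
`f(u,w) + f(u',w') + m * (bᵢ - min b)`. The normalisation `min u = min u' = 0` makes `m ≥ 0`,
so the minimum over `i` of this expression is attained where `bᵢ = min b`, giving
`f(u,w) + f(u',w')`.
-/

/-- Minimum of the coordinates of an integer vector indexed by `Fin (n+1)`. -/
def mmin {n : ℕ} (u : Fin (n + 1) → ℤ) : ℤ :=
  Finset.univ.inf' ⟨0, Finset.mem_univ 0⟩ u

open Finset

lemma mmin_le {n : ℕ} (u : Fin (n + 1) → ℤ) (j : Fin (n + 1)) : mmin u ≤ u j :=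
  inf'_le u (mem_univ j)

lemma mmin_add_mmin_le {n : ℕ} (u u' : Fin (n + 1) → ℤ) : mmin u + mmin u' ≤ mmin (u + u') :=
  le_inf' _ _ fun j _ => add_le_add (mmin_le u j) (mmin_le u' j)

lemma sum_mul_sub_add_sum_mul_add_ite {R ι κ : Type*} [CommRing R] [Fintype ι] [Fintype κ]
    [DecidableEq κ] (a x : ι → R) (b y : κ → R) (m : R) (i : κ) :
    ∑ j, a j * (x j - m) + ∑ k, b k * (y k + if k = i then m else 0) =
      ∑ j, a j * x j + ∑ k, b k * y k + m * (b i - ∑ j, a j) := by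
  simp only [mul_sub, mul_add, mul_ite, mul_zero, sum_sub_distrib, sum_add_distrib,
    sum_ite_eq', mem_univ, if_true, ← sum_mul]
  ring

lemma inf'_add_mul_sub_inf' {R ι : Type*} [CommRing R] [LinearOrder R] [IsStrictOrderedRing R]
    {s : Finset ι} (hs : s.Nonempty) (b : ι → R) (c : R) {m : R} (hm : 0 ≤ m) :
    s.inf' hs (fun i => c + m * (b i - s.inf' hs b)) = c := by
  set g : R → R := fun x => c + m * (x - s.inf' hs b)
  have hg : Monotone g := fun x y hxy => by simp only [g]; gcongr
  simpa [g] using (apply_inf'_eq_inf'_comp hs (f := b) g fun _ _ => hg.map_min).symm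

theorem stmt8 (d r : ℕ) (a : Fin (d + 1) → ℤ) (b : Fin (r + 1) → ℤ)
    (hab : ∑ j, a j = mmin b)
    (u u' : Fin (d + 1) → ℤ) (w w' : Fin (r + 1) → ℤ)
    (hu : mmin u = 0) (hu' : mmin u' = 0) :
    ((∑ j, a j * u j) + ∑ k, b k * w k) + ((∑ j, a j * u' j) + ∑ k, b k * w' k) =
      Finset.univ.inf' ⟨0, Finset.mem_univ 0⟩ (fun i : Fin (r + 1) =>
        (∑ j, a j * (u j + u' j - mmin (u + u'))) +
          ∑ k, b k * (w k + w' k + if k = i then mmin (u + u') else 0)) := by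
  have hm : 0 ≤ mmin (u + u') := by simpa [hu, hu'] using mmin_add_mmin_le u u'
  simp_rw [sum_mul_sub_add_sum_mul_add_ite, hab]
  refine Eq.trans ?_ (inf'_add_mul_sub_inf' _ b _ hm).symm
  simp only [mul_add, sum_add_distrib]
  ring
end

section
/- Fix integers d ≥ 1, r ≥ 1. Define v : ℤ^d × ℤ^r → ℤ^r × ℤ^d by v(u,w) = ( w, u + (w₁+⋯+w_r)·𝟙 ), where 𝟙 = (1,…,1) ∈ ℤ^d. Then v restricts to a bijection from 𝕄_{d,r} = {(u,w) : min(u₁,…,u_d) = 0} onto T_{r,d} = {(a,b) ∈ ℤ^r × ℤ^d : a₁ + ⋯ + a_r = min(b₁,…,b_d)}, with inverse given by (a,b) ↦ ( b − min(b₁,…,b_d)·𝟙, a ). -/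
/-- The map `v(u,w) = (w, u + (Σₖ wₖ)·𝟙)`. -/
def vMap (d r : ℕ) (p : (Fin (d + 1) → ℤ) × (Fin (r + 1) → ℤ)) :
    (Fin (r + 1) → ℤ) × (Fin (d + 1) → ℤ) :=
  (p.2, fun j => p.1 j + ∑ k, p.2 k)

/-- The inverse map `(a,b) ↦ (b − min(b)·𝟙, a)`. -/
def vInv (d r : ℕ) (q : (Fin (r + 1) → ℤ) × (Fin (d + 1) → ℤ)) :
    (Fin (d + 1) → ℤ) × (Fin (r + 1) → ℤ) :=
  (fun j => q.2 j - mmin q.2, q.1)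

theorem stmt10 (d r : ℕ) :
    Set.BijOn (vMap d r)
      {p : (Fin (d + 1) → ℤ) × (Fin (r + 1) → ℤ) | mmin p.1 = 0}
      {q : (Fin (r + 1) → ℤ) × (Fin (d + 1) → ℤ) | ∑ i, q.1 i = mmin q.2} ∧
    Set.InvOn (vInv d r) (vMap d r)
      {p : (Fin (d + 1) → ℤ) × (Fin (r + 1) → ℤ) | mmin p.1 = 0}
      {q : (Fin (r + 1) → ℤ) × (Fin (d + 1) → ℤ) | ∑ i, q.1 i = mmin q.2} := by
  have hmin : ∀ {n : ℕ} (u : Fin (n + 1) → ℤ) (c : ℤ),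
      mmin (fun j => u j + c) = mmin u + c := by
    intro n u c
    unfold mmin
    apply le_antisymm
    · obtain ⟨i, _, hi⟩ := Finset.exists_mem_eq_inf' ⟨0, Finset.mem_univ 0⟩ u
      calc Finset.univ.inf' ⟨0, Finset.mem_univ 0⟩ (fun j => u j + c) ≤ u i + c :=
            Finset.inf'_le _ (Finset.mem_univ i)
        _ = _ := by rw [hi]
    · apply Finset.le_inf'
      intro b _
      exact add_le_add_left (Finset.inf'_le _ (Finset.mem_univ b)) c
  have hinv : Set.InvOn (vInv d r) (vMap d r)
      {p : (Fin (d + 1) → ℤ) × (Fin (r + 1) → ℤ) | mmin p.1 = 0}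
      {q : (Fin (r + 1) → ℤ) × (Fin (d + 1) → ℤ) | ∑ i, q.1 i = mmin q.2} := by
    constructor
    · intro p hp
      simp only [Set.mem_setOf_eq] at hp
      simp only [vMap, vInv]
      have : mmin (fun j => p.1 j + ∑ k, p.2 k) = ∑ k, p.2 k := by
        rw [hmin, hp, zero_add]
      rw [this]
      ext <;> simp
    · intro q hq
      simp only [Set.mem_setOf_eq] at hq
      simp only [vMap, vInv]
      refine Prod.ext rfl ?_
      funext j
      simp [hq]
  have hmt : Set.MapsTo (vMap d r)
      {p : (Fin (d + 1) → ℤ) × (Fin (r + 1) → ℤ) | mmin p.1 = 0}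
      {q : (Fin (r + 1) → ℤ) × (Fin (d + 1) → ℤ) | ∑ i, q.1 i = mmin q.2} := by
    intro p hp
    simp only [Set.mem_setOf_eq] at hp ⊢
    simp only [vMap]
    rw [hmin, hp, zero_add]
  have hmt' : Set.MapsTo (vInv d r)
      {q : (Fin (r + 1) → ℤ) × (Fin (d + 1) → ℤ) | ∑ i, q.1 i = mmin q.2}
      {p : (Fin (d + 1) → ℤ) × (Fin (r + 1) → ℤ) | mmin p.1 = 0} := by
    intro q hq
    simp only [Set.mem_setOf_eq] at hq ⊢
    simp only [vInv]
    have := hmin (fun j => q.2 j - mmin q.2) (mmin q.2)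
    simp only [sub_add_cancel] at this
    have h2 : mmin (fun j => q.2 j) = mmin q.2 := rfl
    rw [h2] at this
    omega
  exact ⟨hinv.bijOn hmt hmt', hinv⟩
end

section
/- Let K be a field and d, r positive integers. In the commutative K-algebra A = K[x₁,…,x_d, t₁^{±1},…,t_r^{±1}] / ( x₁⋯x_d − (t₁ + ⋯ + t_r) ), the residues of the monomials x₁^{u₁}⋯x_d^{u_d} t₁^{w₁}⋯t_r^{w_r}, for (u,w) ∈ ℕ^d × ℤ^r with min(u₁,…,u_d) = 0, form a K-vector space basis of A. -/
open AddMonoidAlgebra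

/-- The monoid of Laurent-monomial exponents: `ℕ^{d+1} × ℤ^{r+1}`. -/
abbrev MonDR (d r : ℕ) := (Fin (d + 1) → ℕ) × (Fin (r + 1) → ℤ)

/-- The element `x₁⋯x_d − (t₁ + ⋯ + t_r)` of the monoid algebra
`K[ℕ^{d+1} × ℤ^{r+1}] = K[x₁,…,x_{d+1}, t₁^{±1},…,t_{r+1}^{±1}]`. -/
noncomputable def relatorDR (K : Type*) [Field K] (d r : ℕ) :
    AddMonoidAlgebra K (MonDR d r) :=
  AddMonoidAlgebra.single ((fun _ => 1 : Fin (d + 1) → ℕ), (0 : Fin (r + 1) → ℤ)) (1 : K) -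
    ∑ i : Fin (r + 1),
      AddMonoidAlgebra.single ((0 : Fin (d + 1) → ℕ), Pi.single i (1 : ℤ)) (1 : K)

namespace Stmt13Aux

variable (K : Type*) [Field K] (d r : ℕ)

noncomputable def T : AddMonoidAlgebra K (MonDR d r) :=
  ∑ i : Fin (r + 1),
    AddMonoidAlgebra.single ((0 : Fin (d + 1) → ℕ), Pi.single i (1 : ℤ)) (1 : K)

noncomputable def X : AddMonoidAlgebra K (MonDR d r) :=
  AddMonoidAlgebra.single ((fun _ => 1 : Fin (d + 1) → ℕ), (0 : Fin (r + 1) → ℤ)) (1 : K)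

lemma relator_eq : relatorDR K d r = X K d r - T K d r := rfl

def mval (u : Fin (d + 1) → ℕ) : ℕ := Finset.univ.inf' ⟨0, Finset.mem_univ 0⟩ u

lemma mval_le (u : Fin (d + 1) → ℕ) (i : Fin (d + 1)) : mval d u ≤ u i :=
  Finset.inf'_le _ (Finset.mem_univ i)

lemma exists_mval (u : Fin (d + 1) → ℕ) : ∃ i, u i = mval d u := by
  obtain ⟨i, -, hi⟩ := Finset.exists_mem_eq_inf' (⟨0, Finset.mem_univ 0⟩ :
    (Finset.univ : Finset (Fin (d+1))).Nonempty) u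
  exact ⟨i, hi.symm⟩

lemma mval_add_one (u : Fin (d + 1) → ℕ) :
    mval d (u + fun _ => (1 : ℕ)) = mval d u + 1 := by
  have happ : ∀ i, (u + fun _ => (1 : ℕ) : Fin (d + 1) → ℕ) i = u i + 1 := fun i => rfl
  apply le_antisymm
  · obtain ⟨i, hi⟩ := exists_mval d u
    have h := mval_le d (u + fun _ => (1 : ℕ)) i
    rw [happ i, hi] at h
    exact h
  · refine Finset.le_inf' _ _ fun i _ => ?_
    rw [happ i]
    exact Nat.add_le_add_right (mval_le d u i) 1

lemma mval_sub (u : Fin (d + 1) → ℕ) : mval d (fun i => u i - mval d u) = 0 := by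
  obtain ⟨i, hi⟩ := exists_mval d u
  exact Nat.le_zero.mp (by simpa [hi] using mval_le d (fun i => u i - mval d u) i)

noncomputable def nf (q : MonDR d r) : AddMonoidAlgebra K (MonDR d r) :=
  AddMonoidAlgebra.single ((fun i => q.1 i - mval d q.1), q.2) 1 * (T K d r) ^ (mval d q.1)

noncomputable def N : AddMonoidAlgebra K (MonDR d r) →ₗ[K] AddMonoidAlgebra K (MonDR d r) :=
  Finsupp.linearCombination K (nf K d r) ∘ₗ (AddMonoidAlgebra.coeffLinearEquiv K).toLinearMap

lemma N_single (q : MonDR d r) :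
    N K d r (AddMonoidAlgebra.single q 1) = nf K d r q := by
  have := Finsupp.linearCombination_single K (v := nf K d r) (1 : K) q
  rw [one_smul] at this
  exact this

lemma nf_of_mval_zero (q : MonDR d r) (h : mval d q.1 = 0) :
    nf K d r q = AddMonoidAlgebra.single q 1 := by
  have : (fun i => q.1 i - mval d q.1) = q.1 := by
    funext i; simp [h]
  simp [nf, h, this]

lemma single_mul_T (q : MonDR d r) :
    AddMonoidAlgebra.single q (1 : K) * T K d r =
      ∑ i : Fin (r + 1),
        AddMonoidAlgebra.single (q.1, q.2 + Pi.single i 1) 1 := by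
  rw [T, Finset.mul_sum]
  refine Finset.sum_congr rfl fun i _ => ?_
  rw [AddMonoidAlgebra.single_mul_single]
  simp [Prod.add_def]

lemma N_single_mul_relator (q : MonDR d r) :
    N K d r (AddMonoidAlgebra.single q (1 : K) * relatorDR K d r) = 0 := by
  obtain ⟨u, w⟩ := q
  have h1 : AddMonoidAlgebra.single (u, w) (1 : K) * X K d r =
      AddMonoidAlgebra.single (u + fun _ => 1, w) 1 := by
    rw [X, AddMonoidAlgebra.single_mul_single]
    simp [Prod.add_def]
  rw [relator_eq, mul_sub, h1, single_mul_T, map_sub, map_sum, N_single]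
  have hsum : ∀ i : Fin (r + 1),
      N K d r (AddMonoidAlgebra.single ((u, w).1, (u, w).2 + Pi.single i 1) (1 : K)) =
        AddMonoidAlgebra.single ((fun i => u i - mval d u), w + Pi.single i 1) 1 *
          (T K d r) ^ (mval d u) := by
    intro i
    rw [N_single, nf]
  rw [Finset.sum_congr rfl fun i _ => hsum i]
  have h2 : nf K d r (u + fun _ => 1, w) =
      AddMonoidAlgebra.single ((fun i => u i - mval d u), w) 1 * (T K d r) ^ (mval d u + 1) := by
    rw [nf]
    have hm : mval d ((u + fun _ => 1 : Fin (d+1) → ℕ)) = mval d u + 1 := mval_add_one d u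
    have hu : (fun i => (u + fun _ => 1 : Fin (d+1) → ℕ) i -
        mval d (u + fun _ => 1 : Fin (d+1) → ℕ)) = fun i => u i - mval d u := by
      funext i; simp [hm, Nat.succ_sub_succ]
    rw [hu, hm]
  rw [h2]
  have h3 : (∑ i : Fin (r+1),
      AddMonoidAlgebra.single ((fun i => u i - mval d u), w + Pi.single i 1) (1:K) *
        (T K d r) ^ (mval d u)) =
      (AddMonoidAlgebra.single ((fun i => u i - mval d u), w) (1:K) * T K d r) *
        (T K d r) ^ (mval d u) := by
    rw [single_mul_T, Finset.sum_mul]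
  rw [h3]
  ring

lemma N_mem_span (f : AddMonoidAlgebra K (MonDR d r))
    (hf : f ∈ Ideal.span {relatorDR K d r}) : N K d r f = 0 := by
  rw [Ideal.mem_span_singleton] at hf
  obtain ⟨g, rfl⟩ := hf
  rw [mul_comm]
  have : (N K d r ∘ₗ LinearMap.mulRight K (relatorDR K d r)) g = 0 := by
    have hext : (N K d r ∘ₗ LinearMap.mulRight K (relatorDR K d r)) = 0 := by
      apply LinearMap.toAddMonoidHom_injective
      apply AddMonoidAlgebra.addMonoidHom_ext
      intro a b
      have hb : (AddMonoidAlgebra.single a b : AddMonoidAlgebra K (MonDR d r)) =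
          b • AddMonoidAlgebra.single a 1 := by
        rw [AddMonoidAlgebra.smul_single', mul_one]
      simp only [LinearMap.toAddMonoidHom_coe, LinearMap.comp_apply, LinearMap.zero_apply]
      rw [hb, map_smul, map_smul]
      have h0 : N K d r ((LinearMap.mulRight K (relatorDR K d r))
          (AddMonoidAlgebra.single a (1 : K))) = 0 := N_single_mul_relator K d r a
      exact (congrArg (fun z => b • z) h0).trans (smul_zero b)
    rw [hext]; rfl
  simpa using this

lemma single_sub_nf_mem (q : MonDR d r) :
    AddMonoidAlgebra.single q (1 : K) - nf K d r q ∈ Ideal.span {relatorDR K d r} := by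
  set m := mval d q.1 with hm
  have hsm : m • (((fun _ => 1) : Fin (d+1) → ℕ), (0 : Fin (r+1) → ℤ)) =
      (((fun _ => m) : Fin (d+1) → ℕ), (0 : Fin (r+1) → ℤ)) := by
    rw [Prod.smul_mk, smul_zero]
    congr 1
    funext i
    show m • (1 : ℕ) = m
    simp
  have hX : (X K d r) ^ m =
      AddMonoidAlgebra.single ((fun _ => m : Fin (d+1) → ℕ), (0 : Fin (r+1) → ℤ)) 1 := by
    rw [X, AddMonoidAlgebra.single_pow, one_pow, hsm]
  have hidx : (((fun i => q.1 i - m) : Fin (d+1) → ℕ), q.2) +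
      (((fun _ => m) : Fin (d+1) → ℕ), (0 : Fin (r+1) → ℤ)) = q := by
    rw [Prod.mk_add_mk, add_zero]
    have h1 : ((fun i => q.1 i - m) + fun _ => m : Fin (d+1) → ℕ) = q.1 := by
      funext i
      simp only [Pi.add_apply]; exact Nat.sub_add_cancel (mval_le d q.1 i)
    rw [h1]
  have hq : AddMonoidAlgebra.single q (1 : K) =
      AddMonoidAlgebra.single ((fun i => q.1 i - m), q.2) 1 * (X K d r) ^ m := by
    rw [hX, AddMonoidAlgebra.single_mul_single, one_mul, hidx]
  rw [hq, nf, ← mul_sub]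
  rw [Ideal.mem_span_singleton, relator_eq]
  exact Dvd.dvd.mul_left (sub_dvd_pow_sub_pow _ _ m) _

end Stmt13Aux

open Stmt13Aux in
theorem stmt13 (K : Type*) [Field K] (d r : ℕ) :
    LinearIndependent K
      (fun q : {q : MonDR d r // Finset.univ.inf' ⟨0, Finset.mem_univ 0⟩ q.1 = 0} =>
        Ideal.Quotient.mk (Ideal.span {relatorDR K d r})
          (AddMonoidAlgebra.single q.1 (1 : K))) ∧
    ⊤ ≤ Submodule.span K (Set.range
      (fun q : {q : MonDR d r // Finset.univ.inf' ⟨0, Finset.mem_univ 0⟩ q.1 = 0} =>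
        Ideal.Quotient.mk (Ideal.span {relatorDR K d r})
          (AddMonoidAlgebra.single q.1 (1 : K)))) := by
  set I := Ideal.span {relatorDR K d r} with hI
  set S := {q : MonDR d r // Finset.univ.inf' ⟨0, Finset.mem_univ 0⟩ q.1 = 0}
  set s : S → AddMonoidAlgebra K (MonDR d r) := fun q => AddMonoidAlgebra.single q.1 1
  constructor
  · rw [linearIndependent_iff]
    intro l hl
    have hmk : (Ideal.Quotient.mkₐ K I).toLinearMap (Finsupp.linearCombination K s l) = 0 := by
      rw [Finsupp.apply_linearCombination]
      exact hl
    have hmem : Finsupp.linearCombination K s l ∈ I := by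
      rwa [← Ideal.Quotient.eq_zero_iff_mem (I := I)]
    have hNl : N K d r (Finsupp.linearCombination K s l) = Finsupp.linearCombination K s l := by
      have hcomp : (⇑(N K d r) ∘ s) = s := by
        funext q
        simp only [Function.comp_apply, s]
        rw [N_single, nf_of_mval_zero K d r q.1 q.2]
      rw [Finsupp.apply_linearCombination, hcomp]
    have h0 : Finsupp.linearCombination K s l = 0 := by
      rw [← hNl]
      exact N_mem_span K d r _ hmem
    have hind : LinearIndependent K s := by
      have hbase : LinearIndependent K
          (fun a : MonDR d r => (AddMonoidAlgebra.single a 1 : AddMonoidAlgebra K (MonDR d r))) :=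
        (AddMonoidAlgebra.basis (MonDR d r) K).linearIndependent
      exact hbase.comp Subtype.val Subtype.val_injective
    exact linearIndependent_iff.mp hind l h0
  · -- spanning
    have key : ∀ (m : ℕ) (q : MonDR d r), mval d q.1 = 0 →
        Ideal.Quotient.mk I (AddMonoidAlgebra.single q 1 * (T K d r) ^ m) ∈
          Submodule.span K (Set.range fun q : S =>
            Ideal.Quotient.mk I (AddMonoidAlgebra.single q.1 (1:K))) := by
      intro m
      induction m with
      | zero =>
        intro q hq
        simp only [pow_zero, mul_one]
        exact Submodule.subset_span ⟨⟨q, hq⟩, rfl⟩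
      | succ m ih =>
        intro q hq
        have : AddMonoidAlgebra.single q (1:K) * (T K d r) ^ (m+1) =
            ∑ i : Fin (r+1),
              AddMonoidAlgebra.single (q.1, q.2 + Pi.single i 1) 1 * (T K d r) ^ m := by
          rw [pow_succ', ← mul_assoc, single_mul_T, Finset.sum_mul]
        rw [this, map_sum]
        exact Submodule.sum_mem _ fun i _ => ih (q.1, q.2 + Pi.single i 1) hq
    intro y _
    obtain ⟨f, rfl⟩ := Ideal.Quotient.mk_surjective y
    have hf : f = ∑ a ∈ f.coeff.support, AddMonoidAlgebra.single a (f.coeff a) := by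
      conv_lhs => rw [← AddMonoidAlgebra.sum_coeff_single f]
      rfl
    rw [hf, map_sum]
    refine Submodule.sum_mem _ fun a ha => ?_
    have h1 : (AddMonoidAlgebra.single a (f.coeff a) : AddMonoidAlgebra K (MonDR d r)) =
        f.coeff a • AddMonoidAlgebra.single a 1 := by
      rw [AddMonoidAlgebra.smul_single', mul_one]
    have hsm : Ideal.Quotient.mk I (f.coeff a • AddMonoidAlgebra.single a (1 : K)) =
        f.coeff a • Ideal.Quotient.mk I (AddMonoidAlgebra.single a (1 : K)) := by
      have h2 := map_smul (Ideal.Quotient.mkₐ K I) (f.coeff a) (AddMonoidAlgebra.single a (1 : K))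
      simpa [Ideal.Quotient.mkₐ_eq_mk] using h2
    rw [h1, hsm]
    refine Submodule.smul_mem _ _ ?_
    have heq : Ideal.Quotient.mk I (AddMonoidAlgebra.single a (1:K)) =
        Ideal.Quotient.mk I (nf K d r a) := by
      rw [Ideal.Quotient.mk_eq_mk_iff_sub_mem]
      exact single_sub_nf_mem K d r a
    rw [heq, nf]
    exact key (mval d a.1) ((fun i => a.1 i - mval d a.1), a.2) (mval_sub d a.1)
end
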